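/- The position S₁ + S₂ (one strip of length 1 plus one strip of length 2) is equivalent to the zero game modulo the universe of Partizan Kayles positions: for every Partizan Kayles position X, o⁻(S₁ + S₂ + X) = o⁻(X). -/

import Mathlib

/-- Add a strip of length `k` to a position (strips of length 0 are discarded). -/
def addStrip (m : Multiset ℕ) (k : ℕ) : Multiset ℕ := if k = 0 then m else k ::ₘ m

/-- Left removes one square from a strip of length `n ≥ 1`, leaving strips `i` and `n-1-i`. -/
def LeftMove (G G' : Multiset ℕ) : Prop :=
  ∃ n ∈ G, ∃ i, i + 1 ≤ n ∧ G' = addStrip (addStrip (G.erase n) i) (n - 1 - i)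

/-- Right removes two adjacent squares from a strip of length `n ≥ 2`, leaving `i` and `n-2-i`. -/
def RightMove (G G' : Multiset ℕ) : Prop :=
  ∃ n ∈ G, ∃ i, i + 2 ≤ n ∧ G' = addStrip (addStrip (G.erase n) i) (n - 2 - i)

mutual
  /-- Misère play: Left, to move, wins (a player unable to move wins). -/
  inductive LeftWinsMover : Multiset ℕ → Prop
    | cannot (G : Multiset ℕ) : (¬ ∃ G', LeftMove G G') → LeftWinsMover G
    | move (G G' : Multiset ℕ) : LeftMove G G' → LeftWinsWaiter G' → LeftWinsMover G
  /-- Misère play: Left wins with Right to move. -/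
  inductive LeftWinsWaiter : Multiset ℕ → Prop
    | intro (G : Multiset ℕ) : (∃ G', RightMove G G') →
        (∀ G', RightMove G G' → LeftWinsMover G') → LeftWinsWaiter G
end

inductive Outcome | L | N | P | R
  deriving DecidableEq

open Classical in
/-- The misère outcome `o⁻(G)`. -/
noncomputable def outcome (G : Multiset ℕ) : Outcome :=
  if LeftWinsMover G then (if LeftWinsWaiter G then Outcome.L else Outcome.N)
  else (if LeftWinsWaiter G then Outcome.P else Outcome.R)

/-- The partial order on outcomes: `L` greatest, `R` least, `N` and `P` incomparable. -/
def Outcome.le (a b : Outcome) : Prop := a = b ∨ a = Outcome.R ∨ b = Outcome.L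

/-- `pos k j` is the position `kS₁ + jS₂`. -/
def pos (k j : ℕ) : Multiset ℕ := Multiset.replicate k 1 + Multiset.replicate j 2

/-!
Give a strip of length `n` the weight `0`, `-1`, `1` according as `n ≡ 0, 1, 2 (mod 3)`, and a
position the total weight `w` of its strips. Since the weight of a strip is `≡ -n (mod 3)`, a Left
move changes `w` by `+1` or `-2` and a Right move by `-1` or `+2`. Left can always make a `+1` move
unless every nonempty strip has length `2` (and then `w ≥ 1`, so `-2` does as well), and Right can
always make a `-1` move. By induction on the number of squares, Left wins moving first iff `w ≥ 0`
and `w ≡ 0 (mod 3)`, and moving second iff `w ≥ 1` and `w ≡ 1 (mod 3)`. The outcome therefore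
depends only on `w`, and `S₁ + S₂` has weight `-1 + 1 = 0`.
-/

def stripWeight (n : ℕ) : ℤ := if n % 3 = 2 then 1 else if n % 3 = 1 then -1 else 0

def weight (G : Multiset ℕ) : ℤ := (G.map stripWeight).sum

lemma stripWeight_add_add_one {i j : ℕ} :
    stripWeight (i + j + 1) = stripWeight i + stripWeight j - 1 ∨
      stripWeight (i + j + 1) = stripWeight i + stripWeight j + 2 := by
  unfold stripWeight; split_ifs <;> omega

lemma stripWeight_add_add_two {i j : ℕ} :
    stripWeight (i + j + 2) = stripWeight i + stripWeight j + 1 ∨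
      stripWeight (i + j + 2) = stripWeight i + stripWeight j - 2 := by
  unfold stripWeight; split_ifs <;> omega

lemma weight_cons (n : ℕ) (G : Multiset ℕ) : weight (n ::ₘ G) = stripWeight n + weight G := by
  simp [weight]

lemma weight_addStrip (G : Multiset ℕ) (k : ℕ) :
    weight (addStrip G k) = weight G + stripWeight k := by
  unfold addStrip
  split_ifs with hk
  · simp [hk, stripWeight]
  · rw [weight_cons, add_comm]

lemma weight_erase {G : Multiset ℕ} {n : ℕ} (hn : n ∈ G) :
    weight G = stripWeight n + weight (G.erase n) := by
  rw [← weight_cons, Multiset.cons_erase hn]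

lemma sum_addStrip (G : Multiset ℕ) (k : ℕ) : (addStrip G k).sum = G.sum + k := by
  unfold addStrip
  split_ifs with hk <;> simp [hk, add_comm]

lemma weight_split {G : Multiset ℕ} {n : ℕ} (hn : n ∈ G) (i j : ℕ) :
    weight (addStrip (addStrip (G.erase n) i) j) =
      weight G - stripWeight n + stripWeight i + stripWeight j := by
  rw [weight_addStrip, weight_addStrip, weight_erase hn]
  ring

lemma sum_split {G : Multiset ℕ} {n : ℕ} (hn : n ∈ G) (i j : ℕ) :
    (addStrip (addStrip (G.erase n) i) j).sum + n = G.sum + i + j := by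
  rw [sum_addStrip, sum_addStrip, ← Multiset.sum_erase hn]
  ring

namespace LeftMove

variable {G G' : Multiset ℕ}

lemma sum_lt (h : LeftMove G G') : G'.sum < G.sum := by
  obtain ⟨n, hn, i, hi, rfl⟩ := h
  have := sum_split hn i (n - 1 - i)
  omega

lemma weight_eq_add_one_or_sub_two (h : LeftMove G G') : weight G' = weight G + 1 ∨ weight G' = weight G - 2 := by
  obtain ⟨n, hn, i, hi, rfl⟩ := h
  have hsplit : i + (n - 1 - i) + 1 = n := by omega
  have := hsplit ▸ stripWeight_add_add_one (i := i) (j := n - 1 - i)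
  rw [weight_split hn]
  omega

end LeftMove

namespace RightMove

variable {G G' : Multiset ℕ}

lemma sum_lt (h : RightMove G G') : G'.sum < G.sum := by
  obtain ⟨n, hn, i, hi, rfl⟩ := h
  have := sum_split hn i (n - 2 - i)
  omega

lemma weight_eq_sub_one_or_add_two (h : RightMove G G') : weight G' = weight G - 1 ∨ weight G' = weight G + 2 := by
  obtain ⟨n, hn, i, hi, rfl⟩ := h
  have hsplit : i + (n - 2 - i) + 2 = n := by omega
  have := hsplit ▸ stripWeight_add_add_two (i := i) (j := n - 2 - i)
  rw [weight_split hn]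
  omega

end RightMove

lemma exists_leftMove_weight_add_one {G : Multiset ℕ} {n : ℕ} (hn : n ∈ G) (h1 : 1 ≤ n)
    (h2 : n ≠ 2) : ∃ G', LeftMove G G' ∧ weight G' = weight G + 1 := by
  obtain ⟨i, hi, hw⟩ : ∃ i, i + 1 ≤ n ∧
      stripWeight i + stripWeight (n - 1 - i) = stripWeight n + 1 := by
    by_cases h : n % 3 = 2
    · exact ⟨2, by omega, by unfold stripWeight; split_ifs <;> simp_all <;> omega⟩
    · exact ⟨0, by omega, by unfold stripWeight; split_ifs <;> simp_all <;> omega⟩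
  exact ⟨_, ⟨n, hn, i, hi, rfl⟩, by rw [weight_split hn]; omega⟩

lemma exists_leftMove_weight_sub_two {G : Multiset ℕ} (h : 2 ∈ G) :
    ∃ G', LeftMove G G' ∧ weight G' = weight G - 2 :=
  ⟨_, ⟨2, h, 0, by norm_num, rfl⟩, by rw [weight_split h]; simp [stripWeight]; ring⟩

lemma exists_rightMove_weight_sub_one {G : Multiset ℕ} {n : ℕ} (hn : n ∈ G) (h2 : 2 ≤ n) :
    ∃ G', RightMove G G' ∧ weight G' = weight G - 1 := by
  obtain ⟨i, hi, hw⟩ : ∃ i, i + 2 ≤ n ∧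
      stripWeight i + stripWeight (n - 2 - i) = stripWeight n - 1 := by
    by_cases h : n % 3 = 1
    · exact ⟨1, by omega, by unfold stripWeight; split_ifs <;> simp_all <;> omega⟩
    · exact ⟨0, by omega, by unfold stripWeight; split_ifs <;> simp_all <;> omega⟩
  exact ⟨_, ⟨n, hn, i, hi, rfl⟩, by rw [weight_split hn]; omega⟩

lemma exists_stripWeight_pos_of_weight_pos {G : Multiset ℕ} (h : 0 < weight G) :
    ∃ n ∈ G, 0 < stripWeight n := by
  by_contra! hle
  have := Multiset.sum_map_le_sum_map _ (fun _ => 0) hle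
  simp only [Multiset.map_const', Multiset.sum_replicate, smul_zero] at this
  exact (h.trans_le this).false

lemma leftWinsMover_iff_of_options {G : Multiset ℕ}
    (ih : ∀ G', LeftMove G G' → (LeftWinsWaiter G' ↔ 1 ≤ weight G' ∧ weight G' % 3 = 1)) :
    LeftWinsMover G ↔ 0 ≤ weight G ∧ weight G % 3 = 0 := by
  constructor
  · rintro (⟨_, hstuck⟩ | ⟨_, G', hmove, hwin⟩)
    · have hzero : weight G = 0 := Multiset.sum_eq_zero <| Multiset.forall_mem_map_iff.2
        fun n hn => by
          obtain rfl : n = 0 := by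
            by_contra h0
            exact hstuck ⟨_, n, hn, 0, by omega, rfl⟩
          rfl
      omega
    · have := (ih G' hmove).1 hwin
      have := hmove.weight_eq_add_one_or_sub_two
      omega
  · rintro ⟨hnonneg, hmod⟩
    by_cases hgood : ∃ n ∈ G, 1 ≤ n ∧ n ≠ 2
    · obtain ⟨n, hn, h1, h2⟩ := hgood
      obtain ⟨G', hmove, hw⟩ := exists_leftMove_weight_add_one hn h1 h2
      exact .move G G' hmove ((ih G' hmove).2 (by omega))
    by_cases htwo : 2 ∈ G
    · push Not at hgood
      have hrest : 0 ≤ weight (G.erase 2) := Multiset.sum_nonneg <| Multiset.forall_mem_map_iff.2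
        fun n hn => by
          rcases Nat.eq_zero_or_pos n with rfl | hpos
          · rfl
          · rw [hgood n (Multiset.mem_of_mem_erase hn) hpos]; decide
      have hweight : weight G = 1 + weight (G.erase 2) := weight_erase htwo
      obtain ⟨G', hmove, hw⟩ := exists_leftMove_weight_sub_two htwo
      exact .move G G' hmove ((ih G' hmove).2 (by omega))
    · exact .cannot G fun ⟨_, n, hn, _, hi, _⟩ => hgood ⟨n, hn, by omega, fun h => htwo (h ▸ hn)⟩

lemma leftWinsWaiter_iff_of_options {G : Multiset ℕ}
    (ih : ∀ G', RightMove G G' → (LeftWinsMover G' ↔ 0 ≤ weight G' ∧ weight G' % 3 = 0)) :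
    LeftWinsWaiter G ↔ 1 ≤ weight G ∧ weight G % 3 = 1 := by
  constructor
  · rintro ⟨_, ⟨_, n, hn, _, hi, _⟩, hall⟩
    obtain ⟨G', hmove, hw⟩ := exists_rightMove_weight_sub_one hn (by omega)
    have := (ih G' hmove).1 (hall G' hmove)
    omega
  · rintro ⟨hpos, hmod⟩
    obtain ⟨n, hn, hwn⟩ := exists_stripWeight_pos_of_weight_pos (by omega : 0 < weight G)
    have h2 : 2 ≤ n := by unfold stripWeight at hwn; split_ifs at hwn <;> omega
    refine .intro G ⟨_, n, hn, 0, by omega, rfl⟩ fun G' hmove => (ih G' hmove).2 ?_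
    have := hmove.weight_eq_sub_one_or_add_two
    omega

theorem leftWins_iff_weight (G : Multiset ℕ) :
    (LeftWinsMover G ↔ 0 ≤ weight G ∧ weight G % 3 = 0) ∧
      (LeftWinsWaiter G ↔ 1 ≤ weight G ∧ weight G % 3 = 1) :=
  ⟨leftWinsMover_iff_of_options fun G' _ => (leftWins_iff_weight G').2,
    leftWinsWaiter_iff_of_options fun G' _ => (leftWins_iff_weight G').1⟩
termination_by G.sum
decreasing_by
  · exact LeftMove.sum_lt ‹_›
  · exact RightMove.sum_lt ‹_›

lemma outcome_eq_of_weight_eq {G H : Multiset ℕ} (h : weight G = weight H) :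
    outcome G = outcome H := by
  have hMover : LeftWinsMover G = LeftWinsMover H := by
    rw [(leftWins_iff_weight G).1, (leftWins_iff_weight H).1, h]
  have hWaiter : LeftWinsWaiter G = LeftWinsWaiter H := by
    rw [(leftWins_iff_weight G).2, (leftWins_iff_weight H).2, h]
  unfold outcome
  rw [hMover, hWaiter]

theorem kayles_S1_plus_S2_equiv_zero :
    ∀ X : Multiset ℕ, 0 ∉ X → outcome (1 ::ₘ 2 ::ₘ X) = outcome X := by
  intro X _
  apply outcome_eq_of_weight_eq
  simp [weight_cons, stripWeight]
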